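/- For any even natural number ℓ and any real number x with |x| ≤ ℓ/2, one has E_ℓ(x) · E_ℓ(-x) ≥ 1, where E_ℓ(x) = ∑_{j=0}^{ℓ} x^j/j!. -/

import Mathlib

/-! The product `F(y) = E_ℓ(y) E_ℓ(-y)` is even, equals `1` at `0`, and, since `E_ℓ' = E_ℓ - y^ℓ/ℓ!`,
has derivative `(y^ℓ/ℓ!) (E_ℓ(y) - E_ℓ(-y))` when `ℓ` is even. For `y ≥ 0` each term of `E_ℓ(y)`
dominates the corresponding term of `E_ℓ(-y)`, so `F` is nondecreasing on `[0, ∞)` and `F ≥ 1`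
everywhere. -/

open Finset Nat

noncomputable def truncExp (n : ℕ) (x : ℝ) : ℝ :=
  ∑ j ∈ range (n + 1), x ^ j / j !

theorem truncExp_zero_left : truncExp 0 = fun _ => 1 := by
  ext x
  simp [truncExp]

theorem truncExp_succ (n : ℕ) (x : ℝ) :
    truncExp (n + 1) x = truncExp n x + x ^ (n + 1) / (n + 1)! :=
  sum_range_succ _ _

theorem truncExp_zero_right (n : ℕ) : truncExp n 0 = 1 := by
  induction n with
  | zero => simp [truncExp_zero_left]
  | succ n ih => simp [truncExp_succ, ih]

theorem hasDerivAt_pow_div_factorial_succ (n : ℕ) (x : ℝ) :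
    HasDerivAt (fun y : ℝ => y ^ (n + 1) / (n + 1)!) (x ^ n / n !) x := by
  refine ((hasDerivAt_pow (n + 1) x).div_const ((n + 1)! : ℝ)).congr_deriv ?_
  rw [Nat.factorial_succ, Nat.cast_mul, Nat.add_sub_cancel]
  field_simp

theorem hasDerivAt_truncExp_succ (n : ℕ) (x : ℝ) :
    HasDerivAt (truncExp (n + 1)) (truncExp n x) x := by
  induction n with
  | zero =>
    rw [funext (truncExp_succ 0), truncExp_zero_left]
    exact ((hasDerivAt_pow_div_factorial_succ 0 x).const_add 1).congr_deriv (by simp)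
  | succ n ih =>
    rw [funext (truncExp_succ (n + 1)), truncExp_succ n x]
    exact ih.add (hasDerivAt_pow_div_factorial_succ (n + 1) x)

theorem hasDerivAt_truncExp (n : ℕ) (x : ℝ) :
    HasDerivAt (truncExp n) (truncExp n x - x ^ n / n !) x := by
  cases n with
  | zero => simpa [truncExp_zero_left] using hasDerivAt_const x (1 : ℝ)
  | succ n => simpa [truncExp_succ] using hasDerivAt_truncExp_succ n x

theorem truncExp_neg_le {x : ℝ} (hx : 0 ≤ x) (n : ℕ) : truncExp n (-x) ≤ truncExp n x := by
  refine sum_le_sum fun j _ => div_le_div_of_nonneg_right ?_ (by positivity)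
  calc (-x) ^ j ≤ |(-x) ^ j| := le_abs_self _
    _ = x ^ j := by rw [abs_pow, abs_neg, abs_of_nonneg hx]

theorem hasDerivAt_truncExp_mul_truncExp_neg {n : ℕ} (hn : Even n) (x : ℝ) :
    HasDerivAt (fun y => truncExp n y * truncExp n (-y))
      (x ^ n / n ! * (truncExp n x - truncExp n (-x))) x := by
  have hneg : HasDerivAt (fun y => truncExp n (-y)) ((truncExp n (-x) - (-x) ^ n / n !) * -1) x :=
    (hasDerivAt_truncExp n (-x)).comp x (hasDerivAt_neg x)
  refine ((hasDerivAt_truncExp n x).mul hneg).congr_deriv ?_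
  rw [hn.neg_pow]
  ring

theorem monotoneOn_truncExp_mul_truncExp_neg {n : ℕ} (hn : Even n) :
    MonotoneOn (fun y => truncExp n y * truncExp n (-y)) (Set.Ici 0) := by
  refine monotoneOn_of_hasDerivWithinAt_nonneg (convex_Ici 0)
    (fun y _ => (hasDerivAt_truncExp_mul_truncExp_neg hn y).continuousAt.continuousWithinAt)
    (fun y _ => (hasDerivAt_truncExp_mul_truncExp_neg hn y).hasDerivWithinAt) fun y hy => ?_
  rw [interior_Ici] at hy
  exact mul_nonneg (div_nonneg (pow_nonneg hy.le n) (by positivity))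
    (sub_nonneg.mpr (truncExp_neg_le hy.le n))

theorem one_le_truncExp_mul_truncExp_neg {n : ℕ} (hn : Even n) (x : ℝ) :
    1 ≤ truncExp n x * truncExp n (-x) := by
  have habs : truncExp n x * truncExp n (-x) = truncExp n |x| * truncExp n (-|x|) := by
    rcases abs_choice x with h | h <;> rw [h]
    rw [neg_neg, mul_comm]
  calc (1 : ℝ) = truncExp n 0 * truncExp n (-0) := by simp [truncExp_zero_right]
    _ ≤ truncExp n |x| * truncExp n (-|x|) :=
      monotoneOn_truncExp_mul_truncExp_neg hn Set.self_mem_Ici (abs_nonneg x) (abs_nonneg x)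
    _ = truncExp n x * truncExp n (-x) := habs.symm

theorem truncated_exp_mul_ge_one_general (ℓ : ℕ) (hℓ : Even ℓ) (x : ℝ) :
    1 ≤ (∑ j ∈ Finset.range (ℓ + 1), x ^ j / (Nat.factorial j)) *
      (∑ j ∈ Finset.range (ℓ + 1), (-x) ^ j / (Nat.factorial j)) :=
  one_le_truncExp_mul_truncExp_neg hℓ x

/-- For even `ℓ` and `|x| ≤ ℓ/2`, one has `E_ℓ(x) · E_ℓ(-x) ≥ 1`. -/
theorem truncated_exp_mul_ge_one (ℓ : ℕ) (hℓ : Even ℓ) (x : ℝ) (hx : |x| ≤ (ℓ : ℝ) / 2) :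
    1 ≤ (∑ j ∈ Finset.range (ℓ + 1), x ^ j / (Nat.factorial j)) *
      (∑ j ∈ Finset.range (ℓ + 1), (-x) ^ j / (Nat.factorial j)) :=
  truncated_exp_mul_ge_one_general ℓ hℓ x
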